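/- Let α = [0;1+d₁,\overline{d₂,…,dₙ}] be a Sturm number of type (i) with d₁ = 1 (so dₙ ≥ 1), and let σ be its associated standard morphism. Then for every integer m ≥ 1, dₙ = d_{m(n−1)+1} and σ^m(b) = s_{m(n−1)}^{d_{m(n−1)+1}−d₁} s_{m(n−1)−1}, and the adjoining singular word of index m(n−1)−1 satisfies v_{m(n−1)−1} = a·σ^m(b)·b⁻¹ if m(n−1)−1 is odd, and v_{m(n−1)−1} = b·σ^m(b)·a⁻¹ if m(n−1)−1 is even. -/

import Mathlib

/-- The two-letter alphabet 𝒜 = {a, b}. -/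
inductive AB : Type
  | a : AB
  | b : AB
deriving DecidableEq, Repr

/-- Apply a morphism (determined by its images on the letters) to a finite word. -/
def applyM (g : AB → List AB) (w : List AB) : List AB := w.flatMap g

/-- The exchange morphism E : a ↦ b, b ↦ a. -/
def Em : AB → List AB
  | AB.a => [AB.b]
  | AB.b => [AB.a]

/-- The morphism φ : a ↦ ab, b ↦ a. -/
def phim : AB → List AB
  | AB.a => [AB.a, AB.b]
  | AB.b => [AB.a]

/-- Composition of morphisms: `compM g h` applies `h` first, then `g`. -/
def compM (g h : AB → List AB) : AB → List AB := fun c => applyM g (h c)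

/-- Powers of a morphism. -/
def mpow (g : AB → List AB) : ℕ → AB → List AB
  | 0 => fun c => [c]
  | n + 1 => compM g (mpow g n)

/-- A morphism is standard iff it is a composition of E and φ (in any number and order). -/
inductive IsStandard : (AB → List AB) → Prop
  | id : IsStandard (fun c => [c])
  | compE {ψ : AB → List AB} : IsStandard ψ → IsStandard (compM ψ Em)
  | compPhi {ψ : AB → List AB} : IsStandard ψ → IsStandard (compM ψ phim)

/-- `IsRightConj ψ ξ k` : ξ is the k-th right conjugate of ψ, i.e. there is a word u
of length k with ψ(w)u = uξ(w) for all finite words w. -/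
def IsRightConj (ψ ξ : AB → List AB) (k : ℕ) : Prop :=
  ∃ u : List AB, u.length = k ∧ ∀ w : List AB, applyM ψ w ++ u = u ++ applyM ξ w

/-- w^k (power of a finite word under concatenation). -/
def lpow (w : List AB) : ℕ → List AB
  | 0 => []
  | k + 1 => w ++ lpow w k

/-- Standard sequence associated with a directive sequence (d₁, d₂, …) (here `d`
is indexed so that `d i` is dᵢ for i ≥ 1): `sseq d 0 = s₋₁ = b`, `sseq d (n+1) = sₙ`,
with s₀ = a and sₙ = sₙ₋₁^{dₙ} sₙ₋₂. -/
def sseq (d : ℕ → ℕ) : ℕ → List AB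
  | 0 => [AB.b]
  | 1 => [AB.a]
  | n + 2 => lpow (sseq d (n + 1)) (d (n + 1)) ++ sseq d n

/-- Convergent denominators: `qseq d n` = qₙ = |sₙ| (q₀ = 1, q₁ = 1 + d₁,
qₙ = dₙqₙ₋₁ + qₙ₋₂). -/
def qseq (d : ℕ → ℕ) : ℕ → ℕ
  | 0 => 1
  | 1 => 1 + d 1
  | n + 2 => d (n + 2) * qseq d (n + 1) + qseq d n

/-- `PrefInf u x` : the finite word u is a prefix of the infinite word x. -/
def PrefInf (u : List AB) (x : ℕ → AB) : Prop :=
  ∀ i, i < u.length → u.getD i AB.a = x i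

/-- Image of an infinite word under a (non-erasing) morphism, letter by letter. -/
def applyInf (g : AB → List AB) (x : ℕ → AB) : ℕ → AB :=
  fun i => (applyM g ((List.range (i + 1)).map x)).getD i AB.a

/-- `IsProdInf u x` : the infinite word x is the infinite product u 0 · u 1 · u 2 ⋯,
i.e. every finite partial product is a prefix of x. -/
def IsProdInf (u : ℕ → List AB) (x : ℕ → AB) : Prop :=
  ∀ n, PrefInf (((List.range n).map u).flatten) x

/-- Adjoining singular words: `vword d k` is the adjoining singular word v_{k-1}
(so `vword d 0 = v₋₁`), where vₙ = a·sₙ₊₁^{d_{n+2}−1}sₙ·b⁻¹ for n odd and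
vₙ = b·sₙ₊₁^{d_{n+2}−1}sₙ·a⁻¹ for n even. -/
def vword (d : ℕ → ℕ) (k : ℕ) : List AB :=
  (if k % 2 = 0 then AB.a else AB.b) ::
    (lpow (sseq d (k + 1)) (d (k + 1) - 1) ++ sseq d k).dropLast

/-- Singular words: `wword d k` is the singular word w_{k-2}
(w₋₂ = ε, w₋₁ = a, w₀ = b, and wₙ = a·sₙ·b⁻¹ for n ≥ 1 odd, wₙ = b·sₙ·a⁻¹ for n even). -/
def wword (d : ℕ → ℕ) : ℕ → List AB
  | 0 => []
  | 1 => [AB.a]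
  | 2 => [AB.b]
  | k + 3 =>
      (if (k + 1) % 2 = 1 then AB.a else AB.b) :: (sseq d (k + 2)).dropLast

/-- The standard morphism σ associated with a type (i) Sturm number
α = [0;1+d₁,\overline{d₂,…,dₙ}] : σ(a) = sₙ₋₁, σ(b) = sₙ₋₁^{dₙ−d₁} sₙ₋₂. -/
def sigmaGen (d : ℕ → ℕ) (n : ℕ) : AB → List AB
  | AB.a => sseq d n
  | AB.b => lpow (sseq d n) (d n - d 1) ++ sseq d (n - 1)

/-- The directive sequence of α = [0;2,\overline{r}] : d₁ = 1, dᵢ = r for i ≥ 2. -/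
def dseq (r : ℕ) : ℕ → ℕ := fun i => if i ≤ 1 then 1 else r

/-- The directive sequence of 1 − α = [0;1,d₁,\overline{d₂,…,dₙ}] obtained from that of
α = [0;1+d₁,\overline{d₂,…,dₙ}] : ê₁ = 0 and êᵢ = dᵢ₋₁ for i ≥ 2. -/
def dhat (d : ℕ → ℕ) : ℕ → ℕ := fun i => if i ≤ 1 then 0 else d (i - 1)

/-- `Generates ψ c x` : ψ is prolongable on the letter c and x = ψ^ω(c), i.e. every
ψ^m(c) is a prefix of x. -/
def Generates (ψ : AB → List AB) (c : AB) (x : ℕ → AB) : Prop :=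
  (∃ w : List AB, w ≠ [] ∧ ψ c = c :: w) ∧ ∀ m, PrefInf (mpow ψ m c) x

/-- Fibonacci numbers, shifted: `fibw k = F_{k-1}`, so fibw 0 = F₋₁ = 1,
fibw 1 = F₀ = 1, Fₙ = Fₙ₋₁ + Fₙ₋₂. -/
def fibw : ℕ → ℕ
  | 0 => 1
  | 1 => 1
  | n + 2 => fibw (n + 1) + fibw n

/-- `HasCF γ a` : γ has continued fraction expansion [0; a 1, a 2, a 3, …]. -/
def HasCF (γ : ℝ) (a : ℕ → ℕ) : Prop :=
  ∃ x : ℕ → ℝ, x 0 = γ ∧ (∀ i, 0 < x i ∧ x i < 1) ∧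
    ∀ i, 1 / x i = (a (i + 1) : ℝ) + x (i + 1)

/-- γ has a continued fraction expansion of type (i):
γ = [0;1+d₁,\overline{d₂,…,dₙ}] < 1/2 with dₙ ≥ d₁ ≥ 1. -/
def CFTypeI (γ : ℝ) : Prop :=
  ∃ a : ℕ → ℕ, HasCF γ a ∧ γ < 1 / 2 ∧
    ∃ n : ℕ, 2 ≤ n ∧ ∃ d : ℕ → ℕ,
      (∀ i, 1 ≤ i → 1 ≤ d i) ∧ a 1 = 1 + d 1 ∧ (∀ i, 2 ≤ i → a i = d i) ∧
      (∀ i, 2 ≤ i → d (i + (n - 1)) = d i) ∧ d 1 ≤ d n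

/-- γ has a continued fraction expansion of type (ii):
γ = [0;1,d₁,\overline{d₂,…,dₙ}] > 1/2 with dₙ ≥ d₁. -/
def CFTypeII (γ : ℝ) : Prop :=
  ∃ a : ℕ → ℕ, HasCF γ a ∧ 1 / 2 < γ ∧
    ∃ n : ℕ, 2 ≤ n ∧ ∃ d : ℕ → ℕ,
      (∀ i, 1 ≤ i → 1 ≤ d i) ∧ a 1 = 1 ∧ (∀ i, 2 ≤ i → a i = d (i - 1)) ∧
      (∀ i, 2 ≤ i → d (i + (n - 1)) = d i) ∧ d 1 ≤ d n

/-- A Sturm number: an irrational γ ∈ (0,1) whose continued fraction expansion is of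
type (i) or type (ii). -/
def IsSturmNumber (γ : ℝ) : Prop :=
  Irrational γ ∧ 0 < γ ∧ γ < 1 ∧ (CFTypeI γ ∨ CFTypeII γ)

/-!
The morphism `σ` shifts the standard sequence by one period, `σ(sₖ) = s_{k+n-1}`: for `s₀ = a`
this is the definition of `σ`, for `s₁ = a^{d₁}b` it is `s_{n-1}^{d₁} s_{n-1}^{dₙ-d₁} s_{n-2} = sₙ`
(this needs `d₁ ≤ dₙ`), and it propagates along `sₖ = sₖ₋₁^{dₖ} sₖ₋₂` because `d` has period
`n - 1`. Applying `σ^{m-1}` to `σ(b) = s_{n-1}^{dₙ-d₁} s_{n-2}` gives `σ^m(b)`, and since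
`d_{m(n-1)+1} = dₙ` and `d₁ = 1` this is the word that defines `v_{m(n-1)-1}`.
-/

lemma applyM_append (g : AB → List AB) (u v : List AB) :
    applyM g (u ++ v) = applyM g u ++ applyM g v :=
  List.flatMap_append

lemma lpow_add (w : List AB) (i j : ℕ) : lpow w (i + j) = lpow w i ++ lpow w j := by
  induction i with
  | zero => rw [Nat.zero_add]; rfl
  | succ i ih => rw [Nat.add_right_comm, lpow, lpow, ih, List.append_assoc]

lemma applyM_lpow (g : AB → List AB) (w : List AB) (k : ℕ) :
    applyM g (lpow w k) = lpow (applyM g w) k := by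
  induction k with
  | zero => rfl
  | succ k ih => rw [lpow, lpow, applyM_append, ih]

lemma mpow_succ_apply (g : AB → List AB) (m : ℕ) (c : AB) :
    mpow g (m + 1) c = applyM g (mpow g m c) := rfl

lemma sseq_add_two (d : ℕ → ℕ) (k : ℕ) :
    sseq d (k + 2) = lpow (sseq d (k + 1)) (d (k + 1)) ++ sseq d k := rfl

section Periodic

variable {d : ℕ → ℕ} {n : ℕ}

lemma apply_add_mul_period (hper : ∀ i, 2 ≤ i → d (i + (n - 1)) = d i) {i : ℕ} (hi : 2 ≤ i) :
    ∀ m, d (i + m * (n - 1)) = d i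
  | 0 => by rw [zero_mul, add_zero]
  | m + 1 => by
    rw [add_mul, one_mul, ← add_assoc, hper _ (by omega), apply_add_mul_period hper hi m]

lemma applyM_sigmaGen_sseq (hn : 1 ≤ n) (hper : ∀ i, 2 ≤ i → d (i + (n - 1)) = d i)
    (hdn : d 1 ≤ d n) : ∀ k, applyM (sigmaGen d n) (sseq d (k + 1)) = sseq d (k + n)
  | 0 => by simp [applyM, sigmaGen, sseq]
  | 1 => by
    rw [show 1 + n = n - 1 + 2 by omega, sseq_add_two d (n - 1), show n - 1 + 1 = n by omega,
      ← Nat.add_sub_of_le hdn, lpow_add, sseq_add_two d 0, applyM_append, applyM_lpow]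
    simp [applyM, sigmaGen, sseq]
  | k + 2 => by
    have hd : d (k + n + 1) = d (k + 2) := by
      rw [← hper (k + 2) le_add_self]; congr 1; omega
    rw [sseq_add_two, applyM_append, applyM_lpow, applyM_sigmaGen_sseq hn hper hdn (k + 1),
      applyM_sigmaGen_sseq hn hper hdn k, show k + 2 + n = k + n + 2 by omega, sseq_add_two, hd,
      show k + n + 1 = k + 1 + n by omega]

lemma mpow_sigmaGen_succ_b (hn : 2 ≤ n) (hper : ∀ i, 2 ≤ i → d (i + (n - 1)) = d i)
    (hdn : d 1 ≤ d n) : ∀ m, mpow (sigmaGen d n) (m + 1) AB.b =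
      lpow (sseq d ((m + 1) * (n - 1) + 1)) (d n - d 1) ++ sseq d ((m + 1) * (n - 1))
  | 0 => by
    simp [mpow, compM, applyM, sigmaGen, show n - 1 + 1 = n by omega]
  | m + 1 => by
    have hk : (m + 1) * (n - 1) = (m * (n - 1) + n - 2) + 1 := by
      rw [add_mul, one_mul]; omega
    rw [mpow_succ_apply, mpow_sigmaGen_succ_b hn hper hdn m, applyM_append, applyM_lpow, hk,
      applyM_sigmaGen_sseq (by omega) hper hdn, applyM_sigmaGen_sseq (by omega) hper hdn]
    congr 3 <;> rw [add_mul (m + 1), one_mul, add_mul m, one_mul] <;> omega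

end Periodic

theorem statement19_general (n : ℕ) (hn : 2 ≤ n) (d : ℕ → ℕ)
    (hper : ∀ i, 2 ≤ i → d (i + (n - 1)) = d i)
    (hd1 : d 1 = 1) (hdn : d 1 ≤ d n) :
    ∀ m : ℕ, 1 ≤ m →
      d n = d (m * (n - 1) + 1) ∧
      mpow (sigmaGen d n) m AB.b =
        lpow (sseq d (m * (n - 1) + 1)) (d (m * (n - 1) + 1) - d 1)
          ++ sseq d (m * (n - 1)) ∧
      vword d (m * (n - 1)) =
        (if (m * (n - 1) - 1) % 2 = 1 then AB.a else AB.b) ::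
          (mpow (sigmaGen d n) m AB.b).dropLast := by
  intro m hm
  obtain ⟨m, rfl⟩ : ∃ k, m = k + 1 := ⟨m - 1, by omega⟩
  have hdm : d ((m + 1) * (n - 1) + 1) = d n := by
    rw [← apply_add_mul_period hper hn m, add_mul, one_mul]; congr 1; omega
  have hσ := mpow_sigmaGen_succ_b hn hper hdn m
  have hpos : 1 ≤ (m + 1) * (n - 1) := Nat.mul_pos m.succ_pos (by omega)
  refine ⟨hdm.symm, by rw [hσ, hdm], ?_⟩
  rw [vword, hdm, hσ, hd1]
  congr 1
  generalize (m + 1) * (n - 1) = k at hpos ⊢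
  split_ifs <;> first | rfl | omega

/-- For a type (i) Sturm number α = [0;1+d₁,\overline{d₂,…,dₙ}] with
d₁ = 1, for every m ≥ 1: dₙ = d_{m(n−1)+1},
σ^m(b) = s_{m(n−1)}^{d_{m(n−1)+1}−d₁} s_{m(n−1)−1}, and
v_{m(n−1)−1} = a·σ^m(b)·b⁻¹ if m(n−1)−1 is odd, b·σ^m(b)·a⁻¹ if m(n−1)−1 is even.
(Recall `sseq d (k+1)` is sₖ and `vword d k` is v_{k−1}.) -/
theorem statement19 (n : ℕ) (hn : 2 ≤ n) (d : ℕ → ℕ)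
    (hd : ∀ i, 1 ≤ i → 1 ≤ d i)
    (hper : ∀ i, 2 ≤ i → d (i + (n - 1)) = d i)
    (hd1 : d 1 = 1) (hdn : d 1 ≤ d n) :
    ∀ m : ℕ, 1 ≤ m →
      d n = d (m * (n - 1) + 1) ∧
      mpow (sigmaGen d n) m AB.b =
        lpow (sseq d (m * (n - 1) + 1)) (d (m * (n - 1) + 1) - d 1)
          ++ sseq d (m * (n - 1)) ∧
      vword d (m * (n - 1)) =
        (if (m * (n - 1) - 1) % 2 = 1 then AB.a else AB.b) ::
          (mpow (sigmaGen d n) m AB.b).dropLast :=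
  statement19_general n hn d hper hd1 hdn
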